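/- arXiv:2212.11967 — 5 statements merged into one kernel-verified Lean document; each statement's English description precedes it below -/
import Mathlib

section
/- Let α, κ > 0, let z ≥ 0 be a real number, and let Z̃ be a real-valued random variable (an estimator of z). Define RMSE_α(Z̃, z) = sqrt(E[(max{|Z̃ − z| − α·z, 0})²]) and REL_κ(Z̃, z) = E[|Z̃ − z|] / max{z, κ}. Then REL_κ(Z̃, z) ≤ √2 · (RMSE_α(Z̃, z)/κ + α). -/
/-!
With `Y = max (|Z - z| - α z) 0` we have `|Z - z| ≤ Y + α z` pointwise, and `E Y ≤ √(E Y²)`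
because the variance of `Y` is nonnegative. Hence `E|Z - z| ≤ RMSE_α + α z`, and dividing by
`max z κ ≥ κ, z` gives `REL_κ ≤ RMSE_α / κ + α`; the factor `√2 ≥ 1` is slack.
-/

open MeasureTheory

section Probability

variable {Ω : Type*} [MeasurableSpace Ω] {μ : Measure Ω}

theorem memLp_two_of_integrable_sq_of_nonneg {f : Ω → ℝ} (hf : ∀ ω, 0 ≤ f ω)
    (hsq : Integrable (fun ω => f ω ^ 2) μ) : MemLp f 2 μ := by
  have hmeas : AEStronglyMeasurable f μ := by
    have h := Real.continuous_sqrt.comp_aestronglyMeasurable hsq.aestronglyMeasurable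
    simpa only [Function.comp_def, Real.sqrt_sq (hf _)] using h
  exact (memLp_two_iff_integrable_sq hmeas).2 hsq

variable [IsProbabilityMeasure μ]

theorem integral_le_sqrt_integral_sq {f : Ω → ℝ} (hf : MemLp f 2 μ) :
    ∫ ω, f ω ∂μ ≤ Real.sqrt (∫ ω, f ω ^ 2 ∂μ) := by
  have hvar := ProbabilityTheory.variance_nonneg f μ
  rw [ProbabilityTheory.variance_eq_sub hf] at hvar
  exact (le_abs_self _).trans (Real.abs_le_sqrt (by simpa using hvar))

theorem integral_le_sqrt_integral_sq_excess_add {X : Ω → ℝ} (hX : ∀ ω, 0 ≤ X ω) (c : ℝ)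
    (hsq : Integrable (fun ω => max (X ω - c) 0 ^ 2) μ) :
    ∫ ω, X ω ∂μ ≤ Real.sqrt (∫ ω, max (X ω - c) 0 ^ 2 ∂μ) + c := by
  have hexcess : MemLp (fun ω => max (X ω - c) 0) 2 μ :=
    memLp_two_of_integrable_sq_of_nonneg (fun _ => le_max_right _ _) hsq
  have hint : Integrable (fun ω => max (X ω - c) 0 + c) μ :=
    (hexcess.integrable one_le_two).add (integrable_const c)
  calc ∫ ω, X ω ∂μ ≤ ∫ ω, (max (X ω - c) 0 + c) ∂μ :=
        integral_mono_of_nonneg (.of_forall hX) hint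
          (.of_forall fun ω => by linarith [le_max_left (X ω - c) 0])
    _ = ∫ ω, max (X ω - c) 0 ∂μ + c := by
        rw [integral_add (hexcess.integrable one_le_two) (integrable_const c)]
        simp
    _ ≤ Real.sqrt (∫ ω, max (X ω - c) 0 ^ 2 ∂μ) + c := by
        gcongr
        exact integral_le_sqrt_integral_sq hexcess

end Probability

theorem add_mul_div_max_le {s z α κ : ℝ} (hs : 0 ≤ s) (hα : 0 ≤ α) (hκ : 0 < κ) :
    (s + α * z) / max z κ ≤ s / κ + α := by
  have hmax : 0 < max z κ := lt_max_of_lt_right hκ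
  rw [div_le_iff₀ hmax, add_mul]
  gcongr
  · rw [div_mul_eq_mul_div, le_div_iff₀ hκ]
    exact mul_le_mul_of_nonneg_left (le_max_right _ _) hs
  · exact le_max_left _ _

theorem rel_le_sqrt_two_mul_rmse_general
    {Ω : Type*} [MeasurableSpace Ω] (μ : Measure Ω) [IsProbabilityMeasure μ]
    (Z : Ω → ℝ) (z α κ : ℝ) (hα : 0 < α) (hκ : 0 < κ)
    (h2 : Integrable (fun ω => (max (|Z ω - z| - α * z) 0)^2) μ) :
    (∫ ω, |Z ω - z| ∂μ) / max z κ ≤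
      Real.sqrt 2 *
        (Real.sqrt (∫ ω, (max (|Z ω - z| - α * z) 0)^2 ∂μ) / κ + α) := by
  set rmse := Real.sqrt (∫ ω, (max (|Z ω - z| - α * z) 0)^2 ∂μ)
  have hmean : ∫ ω, |Z ω - z| ∂μ ≤ rmse + α * z :=
    integral_le_sqrt_integral_sq_excess_add (fun ω => abs_nonneg _) (α * z) h2
  have hrmse : 0 ≤ rmse := Real.sqrt_nonneg _
  calc (∫ ω, |Z ω - z| ∂μ) / max z κ ≤ (rmse + α * z) / max z κ := by
        gcongr
    _ ≤ rmse / κ + α := add_mul_div_max_le hrmse hα.le hκ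
    _ ≤ Real.sqrt 2 * (rmse / κ + α) :=
        le_mul_of_one_le_left (by positivity) Real.one_lt_sqrt_two.le

theorem rel_le_sqrt_two_mul_rmse
    {Ω : Type*} [MeasurableSpace Ω] (μ : Measure Ω) [IsProbabilityMeasure μ]
    (Z : Ω → ℝ) (z α κ : ℝ) (hz : 0 ≤ z) (hα : 0 < α) (hκ : 0 < κ)
    (h1 : Integrable (fun ω => |Z ω - z|) μ)
    (h2 : Integrable (fun ω => (max (|Z ω - z| - α * z) 0)^2) μ) :
    (∫ ω, |Z ω - z| ∂μ) / max z κ ≤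
      Real.sqrt 2 *
        (Real.sqrt (∫ ω, (max (|Z ω - z| - α * z) 0)^2 ∂μ) / κ + α) :=
  rel_le_sqrt_two_mul_rmse_general μ Z z α κ hα hκ h2
end

section
/- Let α' > α ≥ 0, η > 0, τ > 0, let w ≥ 0 be a real number and W̃ a real-valued random variable. If sqrt(E[(max{|W̃ − w| − α·w, 0})²]) ≤ (α' − α)·√η·τ, then Pr[|W̃ − w| > α'·max{w, τ}] ≤ η. -/
/-! Since `α' * max w τ ≥ α * w + (α' - α) * τ`, on the bad event the excess
`max (|W - w| - α * w) 0` is at least `(α' - α) * τ`; Chebyshev's inequality for the excess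
then turns the mRMSE bound into the probability bound `η`. -/

open MeasureTheory

section Chebyshev

variable {Ω : Type*} [MeasurableSpace Ω] {μ : Measure Ω}

theorem measure_le_le_ofReal_of_sqrt_integral_sq_le [IsFiniteMeasure μ] {g : Ω → ℝ}
    (hg : Integrable (fun ω => g ω ^ 2) μ) {c η : ℝ} (hc : 0 < c) (hη : 0 ≤ η)
    (h : √(∫ ω, g ω ^ 2 ∂μ) ≤ c * √η) :
    μ {ω | c ≤ g ω} ≤ ENNReal.ofReal η := by
  have hint : ∫ ω, g ω ^ 2 ∂μ ≤ c ^ 2 * η := by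
    have := (Real.sqrt_le_iff.mp h).2
    rwa [mul_pow, Real.sq_sqrt hη] at this
  have hsub : {ω | c ≤ g ω} ⊆ {ω | c ^ 2 ≤ g ω ^ 2} := fun ω hω =>
    pow_le_pow_left₀ hc.le hω 2
  have hmarkov : c ^ 2 * μ.real {ω | c ^ 2 ≤ g ω ^ 2} ≤ c ^ 2 * η :=
    (mul_meas_ge_le_integral_of_nonneg (ae_of_all _ fun ω => sq_nonneg (g ω)) hg _).trans hint
  calc μ {ω | c ≤ g ω} ≤ μ {ω | c ^ 2 ≤ g ω ^ 2} := measure_mono hsub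
    _ = ENNReal.ofReal (μ.real {ω | c ^ 2 ≤ g ω ^ 2}) := (ofReal_measureReal (measure_ne_top μ _)).symm
    _ ≤ ENNReal.ofReal η :=
        ENNReal.ofReal_le_ofReal (le_of_mul_le_mul_left hmarkov (by positivity))

end Chebyshev

theorem sub_mul_le_max_sub_mul_of_mul_max_lt {α α' w τ d : ℝ} (hα : 0 ≤ α) (hαα' : α ≤ α')
    (hd : α' * max w τ < d) : (α' - α) * τ ≤ max (d - α * w) 0 := by
  have hw : α * w ≤ α * max w τ := mul_le_mul_of_nonneg_left (le_max_left w τ) hα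
  have hτ : (α' - α) * τ ≤ (α' - α) * max w τ :=
    mul_le_mul_of_nonneg_left (le_max_right w τ) (sub_nonneg.mpr hαα')
  exact le_max_of_le_left (by linarith)

theorem accuracy_from_mrmse_general
    {Ω : Type*} [MeasurableSpace Ω] (μ : Measure Ω) [IsProbabilityMeasure μ]
    (W : Ω → ℝ)
    (w α α' η τ : ℝ) (hα : 0 ≤ α) (hα' : α < α') (hη : 0 < η) (hτ : 0 < τ)
    (h2 : Integrable (fun ω => (max (|W ω - w| - α * w) 0)^2) μ)
    (hrmse : Real.sqrt (∫ ω, (max (|W ω - w| - α * w) 0)^2 ∂μ) ≤ (α' - α) * Real.sqrt η * τ) :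
    μ {ω | α' * max w τ < |W ω - w|} ≤ ENNReal.ofReal η := by
  calc μ {ω | α' * max w τ < |W ω - w|}
      ≤ μ {ω | (α' - α) * τ ≤ max (|W ω - w| - α * w) 0} :=
        measure_mono fun ω => sub_mul_le_max_sub_mul_of_mul_max_lt hα hα'.le
    _ ≤ ENNReal.ofReal η :=
        measure_le_le_ofReal_of_sqrt_integral_sq_le h2 (mul_pos (sub_pos.mpr hα') hτ) hη.le
          (hrmse.trans_eq (mul_right_comm _ _ _))

theorem accuracy_from_mrmse
    {Ω : Type*} [MeasurableSpace Ω] (μ : Measure Ω) [IsProbabilityMeasure μ]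
    (W : Ω → ℝ) (hW : Measurable W)
    (w α α' η τ : ℝ) (hw : 0 ≤ w) (hα : 0 ≤ α) (hα' : α < α') (hη : 0 < η) (hτ : 0 < τ)
    (h2 : Integrable (fun ω => (max (|W ω - w| - α * w) 0)^2) μ)
    (hrmse : Real.sqrt (∫ ω, (max (|W ω - w| - α * w) 0)^2 ∂μ) ≤ (α' - α) * Real.sqrt η * τ) :
    μ {ω | α' * max w τ < |W ω - w|} ≤ ENNReal.ofReal η :=
  accuracy_from_mrmse_general μ W w α α' η τ hα hα' hη hτ h2 hrmse
end

section
/- Let d ≥ 1 and η ∈ (0, 1/4]. Set κ = 1 − 4η ∈ [1/2, 1). For all nonnegative integers A, B, C with A + B + C = d − 1, d − 1 − B ≤ 4η(d−1), and C ≤ 4η(d−1), one has 2^{−A} · κ^B · (1 − κ)^C ≥ 2^{−(d−1)·H(4η)}, where H(x) = x·log₂(1/x) + (1−x)·log₂(1/(1−x)) is the binary entropy function. -/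
/-!
Write `ε = 4η = 1 - κ` and take `log₂`. Since `A = (d - 1) - B - C`, the exponent of the left side is
`-(d - 1) + B (1 + log₂ κ) + C (1 + log₂ ε)`. Now `1 + log₂ κ ≥ 0` and `1 + log₂ ε ≤ 0` because
`ε ≤ 1/2 ≤ κ`, so replacing `B` by its lower bound `(d - 1) κ` and `C` by its upper bound
`(d - 1) ε` only decreases it, which leaves exactly `(d - 1)(κ log₂ κ + ε log₂ ε) = -(d - 1) H(ε)`.
-/

noncomputable def binEntropy (x : ℝ) : ℝ :=
  x * Real.logb 2 (1 / x) + (1 - x) * Real.logb 2 (1 / (1 - x))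

lemma binEntropy_eq_neg_mul_logb_add (x : ℝ) :
    binEntropy x = -(x * Real.logb 2 x + (1 - x) * Real.logb 2 (1 - x)) := by
  rw [binEntropy, one_div, one_div, Real.logb_inv, Real.logb_inv]
  ring

lemma pow_eq_two_rpow_mul_logb {x : ℝ} (hx : 0 < x) (k : ℕ) :
    x ^ k = (2 : ℝ) ^ (k * Real.logb 2 x) := by
  rw [mul_comm, Real.rpow_mul zero_le_two, Real.rpow_logb zero_lt_two (by norm_num) hx,
    Real.rpow_natCast]

lemma neg_mul_binEntropy_le {ε a b c : ℝ} (hε0 : 0 < ε) (hε : ε ≤ 1 / 2)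
    (hb : (a + b + c) * (1 - ε) ≤ b) (hc : c ≤ (a + b + c) * ε) :
    -((a + b + c) * binEntropy ε) ≤ -a + b * Real.logb 2 (1 - ε) + c * Real.logb 2 ε := by
  have hlogb_half : Real.logb 2 (1 / 2 : ℝ) = -1 := by
    rw [one_div, Real.logb_inv, Real.logb_self_eq_one one_lt_two]
  have hlogb_ε : Real.logb 2 ε ≤ -1 :=
    hlogb_half ▸ Real.logb_le_logb_of_le one_lt_two hε0 hε
  have hlogb_κ : -1 ≤ Real.logb 2 (1 - ε) :=
    hlogb_half ▸ Real.logb_le_logb_of_le one_lt_two one_half_pos (by linarith)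
  have hB : 0 ≤ (b - (a + b + c) * (1 - ε)) * (1 + Real.logb 2 (1 - ε)) :=
    mul_nonneg (by linarith) (by linarith)
  have hC : 0 ≤ ((a + b + c) * ε - c) * (-1 - Real.logb 2 ε) :=
    mul_nonneg (by linarith) (by linarith)
  rw [binEntropy_eq_neg_mul_logb_add]
  linarith

lemma two_rpow_neg_mul_binEntropy_le {ε : ℝ} (hε0 : 0 < ε) (hε : ε ≤ 1 / 2) {A B C : ℕ}
    (hB : ((A + B + C : ℕ) : ℝ) * (1 - ε) ≤ B) (hC : (C : ℝ) ≤ ((A + B + C : ℕ) : ℝ) * ε) :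
    (2 : ℝ) ^ (-(((A + B + C : ℕ) : ℝ) * binEntropy ε)) ≤
      (2 : ℝ) ^ (-(A : ℝ)) * (1 - ε) ^ B * ε ^ C := by
  push_cast at hB hC ⊢
  rw [pow_eq_two_rpow_mul_logb (by linarith) B, pow_eq_two_rpow_mul_logb hε0 C,
    ← Real.rpow_add zero_lt_two, ← Real.rpow_add zero_lt_two]
  exact Real.rpow_le_rpow_of_exponent_le one_le_two (neg_mul_binEntropy_le hε0 hε hB hC)

theorem decoding_probability_lower_bound_general
    (d : ℕ) (hd : 1 ≤ d) (η : ℝ) (hη0 : 0 < η)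
    (κ : ℝ) (hκdef : κ = 1 - 4 * η) (hκhalf : 1/2 ≤ κ)
    (A B C : ℕ) (hABC : A + B + C = d - 1)
    (hB : ((d : ℝ) - 1) - B ≤ 4 * η * ((d : ℝ) - 1))
    (hC : (C : ℝ) ≤ 4 * η * ((d : ℝ) - 1)) :
    (2 : ℝ) ^ (-(A : ℝ)) * κ ^ B * (1 - κ) ^ C ≥
      (2 : ℝ) ^ (-(((d : ℝ) - 1) * binEntropy (4 * η))) := by
  have hn : ((A + B + C : ℕ) : ℝ) = (d : ℝ) - 1 := by
    rw [hABC, Nat.cast_sub hd, Nat.cast_one]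
  subst hκdef
  rw [sub_sub_cancel, ← hn]
  exact two_rpow_neg_mul_binEntropy_le (by linarith) (by linarith)
    (by rw [hn]; linarith) (by rw [hn]; linarith)

theorem decoding_probability_lower_bound
    (d : ℕ) (hd : 1 ≤ d) (η : ℝ) (hη0 : 0 < η) (hη1 : η ≤ 1/4)
    (κ : ℝ) (hκdef : κ = 1 - 4 * η) (hκhalf : 1/2 ≤ κ)
    (A B C : ℕ) (hABC : A + B + C = d - 1)
    (hB : ((d : ℝ) - 1) - B ≤ 4 * η * ((d : ℝ) - 1))
    (hC : (C : ℝ) ≤ 4 * η * ((d : ℝ) - 1)) :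
    (2 : ℝ) ^ (-(A : ℝ)) * κ ^ B * (1 - κ) ^ C ≥
      (2 : ℝ) ^ (-(((d : ℝ) - 1) * binEntropy (4 * η))) :=
  decoding_probability_lower_bound_general d hd η hη0 κ hκdef hκhalf A B C hABC hB hC
end

section
/- Let D : Ω → [N] be a (measurable) decoder and A a randomized algorithm such that for each i ∈ [N], Pr[D(A(x^i)) = i] ≥ p for inputs x¹, ..., x^N. Suppose A is (ε, δ)-DP with respect to ℓ₁-neighbors and ‖x^i − x^j‖₁ ≤ D₀ for all i, j. Then p ≤ e^{ε·D₀}/N + δ·(e^{ε·D₀} − 1)/(e^ε − 1). -/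
/-!
A decoding event `{D = i}` can be pushed from `x i` to any other input `x j` at the price of group
privacy: chaining the `(ε, δ)` guarantee along a path of `D₀` unit steps in `ℤⁿ` multiplies the
probability by `e^{εD₀}` and adds `δ (1 + e^ε + ⋯ + e^{ε(D₀-1)})`. Since the fibres of `D` partition
`Ω`, under `A (x j)` some fibre `{D = i}` has probability at most `1/N`; transporting it back to
`x i`, where it has probability at least `p`, gives the bound.
-/

open MeasureTheory Finset
open scoped ENNReal

theorem sum_abs_sub_eq_zero_iff {ι G : Type*} [Fintype ι] [AddCommGroup G] [LinearOrder G]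
    [IsOrderedAddMonoid G] {x y : ι → G} : ∑ i, |x i - y i| = 0 ↔ x = y := by
  simp [Finset.sum_eq_zero_iff_of_nonneg, funext_iff, sub_eq_zero]

theorem sum_abs_sub_update {ι G : Type*} [Fintype ι] [DecidableEq ι] [AddCommGroup G]
    [LinearOrder G] [IsOrderedAddMonoid G] (x y : ι → G) (l : ι) (v : G) :
    ∑ i, |x i - Function.update y l v i| + |x l - y l| = ∑ i, |x i - y i| + |x l - v| := by
  simp_rw [Function.apply_update (fun i (a : G) => |x i - a|)]
  rw [sum_update_of_mem (mem_univ l), ← add_sum_erase _ _ (mem_univ l), sdiff_singleton_eq_erase]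
  abel

theorem Int.abs_sub_sign {a : ℤ} (ha : a ≠ 0) : |a - a.sign| = |a| - 1 := by
  rcases ha.lt_or_gt with h | h
  · rw [Int.sign_eq_neg_one_of_neg h, abs_of_neg h, abs_of_nonpos (show a - -1 ≤ 0 by omega)]
    ring
  · rw [Int.sign_eq_one_of_pos h, abs_of_pos h, abs_of_nonneg (show 0 ≤ a - 1 by omega)]

theorem exists_neighbor_of_sum_abs_sub_eq_succ {ι : Type*} [Fintype ι] {x y : ι → ℤ} {d : ℕ}
    (h : ∑ i, |x i - y i| = d + 1) :
    ∃ z : ι → ℤ, ∑ i, |x i - z i| = d ∧ ∑ i, |z i - y i| = 1 := by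
  classical
  obtain ⟨l, hl⟩ : ∃ l, x l ≠ y l := by
    by_contra! hxy
    rw [sum_abs_sub_eq_zero_iff.mpr (funext hxy)] at h
    omega
  have hl' : x l - y l ≠ 0 := sub_ne_zero.mpr hl
  -- move `y` one unit towards `x` in the coordinate `l`
  refine ⟨Function.update y l (y l + (x l - y l).sign), ?_, ?_⟩
  · have := sum_abs_sub_update x y l (y l + (x l - y l).sign)
    rw [show x l - (y l + (x l - y l).sign) = x l - y l - (x l - y l).sign by ring,
      Int.abs_sub_sign hl'] at this
    linarith
  · have := sum_abs_sub_update y y l (y l + (x l - y l).sign)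
    rw [← Finset.sum_congr rfl fun i _ => abs_sub_comm (y i) _]
    simp only [sub_self, abs_zero, add_zero, Finset.sum_const_zero, zero_add,
      sub_add_cancel_left, abs_neg, Int.abs_sign_of_ne_zero hl'] at this
    exact this

def IsL1NeighborDP {ι Ω : Type*} [Fintype ι] [MeasurableSpace Ω]
    (A : (ι → ℤ) → Measure Ω) (c δ : ℝ≥0∞) : Prop :=
  ∀ x x' : ι → ℤ, ∑ i, |x i - x' i| = 1 →
    ∀ S : Set Ω, MeasurableSet S → A x S ≤ c * A x' S + δ

namespace IsL1NeighborDP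

variable {ι Ω : Type*} [Fintype ι] [MeasurableSpace Ω] {A : (ι → ℤ) → Measure Ω}
  {c δ : ℝ≥0∞} {S : Set Ω}

theorem le_of_sum_abs_sub_eq (hA : IsL1NeighborDP A c δ) (hS : MeasurableSet S) {d : ℕ}
    {x y : ι → ℤ} (h : ∑ i, |x i - y i| = d) :
    A x S ≤ c ^ d * A y S + δ * ∑ j ∈ range d, c ^ j := by
  induction d generalizing y with
  | zero =>
    obtain rfl : x = y := sum_abs_sub_eq_zero_iff.mp (by exact_mod_cast h)
    simp
  | succ d ih =>
    obtain ⟨z, hxz, hzy⟩ := exists_neighbor_of_sum_abs_sub_eq_succ (by exact_mod_cast h)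
    calc A x S ≤ c ^ d * A z S + δ * ∑ j ∈ range d, c ^ j := ih hxz
      _ ≤ c ^ d * (c * A y S + δ) + δ * ∑ j ∈ range d, c ^ j := by
        gcongr; exact hA z y hzy S hS
      _ = c ^ (d + 1) * A y S + δ * ∑ j ∈ range (d + 1), c ^ j := by
        rw [sum_range_succ, pow_succ]; ring

theorem le_of_sum_abs_sub_le (hA : IsL1NeighborDP A c δ) (hc : 1 ≤ c) (hS : MeasurableSet S)
    {k : ℕ} {x y : ι → ℤ} (h : ∑ i, |x i - y i| ≤ k) :
    A x S ≤ c ^ k * A y S + δ * ∑ j ∈ range k, c ^ j := by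
  lift ∑ i, |x i - y i| to ℕ using sum_nonneg fun i _ => abs_nonneg _ with d hd
  calc A x S ≤ c ^ d * A y S + δ * ∑ j ∈ range d, c ^ j := hA.le_of_sum_abs_sub_eq hS hd.symm
    _ ≤ _ := by
      have hdk : d ≤ k := by exact_mod_cast h
      gcongr

end IsL1NeighborDP

theorem exists_measure_preimage_singleton_le_inv_card {Ω α : Type*} [MeasurableSpace Ω]
    [MeasurableSpace α] [MeasurableSingletonClass α] [Fintype α] [Nonempty α]
    (μ : Measure Ω) [IsProbabilityMeasure μ] {f : Ω → α} (hf : Measurable f) :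
    ∃ a, μ (f ⁻¹' {a}) ≤ (Fintype.card α : ℝ≥0∞)⁻¹ := by
  have hsum : ∑ a, μ (f ⁻¹' {a}) ≤ ∑ _a : α, (Fintype.card α : ℝ≥0∞)⁻¹ := by
    rw [sum_measure_preimage_singleton _ fun a _ => hf (measurableSet_singleton a), coe_univ,
      Set.preimage_univ, measure_univ, sum_const, card_univ, nsmul_eq_mul,
      ENNReal.mul_inv_cancel (by simp) (by simp)]
  obtain ⟨a, -, ha⟩ := ENNReal.exists_le_of_sum_le univ_nonempty hsum
  exact ⟨a, ha⟩

theorem packing_argument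
    {Ω : Type*} [MeasurableSpace Ω] {n N : ℕ} (hN : 1 ≤ N)
    (A : (Fin n → ℤ) → Measure Ω) (hA : ∀ x, IsProbabilityMeasure (A x))
    (D : Ω → Fin N) (hD : Measurable D)
    (ε δ : ℝ) (hε : 0 < ε) (hδ : 0 ≤ δ)
    (hDP : ∀ x x' : Fin n → ℤ, (∑ i, |x i - x' i|) = 1 →
      ∀ S : Set Ω, MeasurableSet S →
        A x S ≤ ENNReal.ofReal (Real.exp ε) * A x' S + ENNReal.ofReal δ)
    (x : Fin N → (Fin n → ℤ)) (D₀ : ℕ)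
    (hdist : ∀ i j : Fin N, (∑ l, |x i l - x j l|) ≤ (D₀ : ℤ))
    (p : ℝ)
    (hp : ∀ i : Fin N, ENNReal.ofReal p ≤ A (x i) {ω | D ω = i}) :
    p ≤ Real.exp (ε * D₀) / N +
      δ * (Real.exp (ε * D₀) - 1) / (Real.exp ε - 1) := by
  have : NeZero N := ⟨by omega⟩
  have hexp : 1 < Real.exp ε := Real.one_lt_exp_iff.mpr hε
  obtain ⟨i, hi⟩ := exists_measure_preimage_singleton_le_inv_card (A (x 0)) hD
  have hbound : ENNReal.ofReal p ≤ ENNReal.ofReal (Real.exp ε) ^ D₀ * (N : ℝ≥0∞)⁻¹ +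
      ENNReal.ofReal δ * ∑ j ∈ range D₀, ENNReal.ofReal (Real.exp ε) ^ j := by
    calc ENNReal.ofReal p ≤ A (x i) (D ⁻¹' {i}) := hp i
      _ ≤ _ := (IsL1NeighborDP.le_of_sum_abs_sub_le hDP (by simpa using hexp.le)
            (hD (measurableSet_singleton i)) (hdist i 0))
      _ ≤ _ := by
        rw [Fintype.card_fin] at hi
        gcongr
  have hreal : Real.exp (ε * D₀) / N + δ * (Real.exp (ε * D₀) - 1) / (Real.exp ε - 1) =
      Real.exp ε ^ D₀ / N + δ * ∑ j ∈ range D₀, Real.exp ε ^ j := by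
    rw [geom_sum_eq hexp.ne', mul_comm ε, Real.exp_nat_mul, mul_div_assoc]
  rw [hreal, ← ENNReal.ofReal_le_ofReal_iff (by positivity), ENNReal.ofReal_add (by positivity)
    (by positivity), ENNReal.ofReal_mul hδ, ENNReal.ofReal_sum_of_nonneg (by intros; positivity),
    ENNReal.ofReal_div_of_pos (by positivity)]
  simpa [ENNReal.ofReal_pow (Real.exp_pos ε).le, div_eq_mul_inv] using hbound
end

section
/- Let M be the matrix from the binary-tree Gram computation: M_{j,k} = λ·∑_{ℓ=0}^{d−1} 2^{−ℓ}·1{leaves j,k share their depth-ℓ ancestor}, λ = 1/(n·d), n = 2^{d−1}, d ≥ 3. For an internal node i at depth ℓ ≤ d−2 with children i_L, i_R, let z^i ∈ ℝⁿ be +1 on leaves under i_L, −1 on leaves under i_R, and 0 elsewhere. Then z^i is an eigenvector of M with eigenvalue λ·∑_{ℓ'=ℓ+1}^{d−1} 2^{d−1−ℓ'}/2^{ℓ'} ≥ λ·n/2^{2(ℓ+1)}. -/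
open Finset

/-!
Leaf `j` (with `0 ≤ j < 2 ^ (d - 1)`) has depth-`ℓ'` ancestor `j / 2 ^ (d - 1 - ℓ')`, and node `q`
has children `2 * q` and `2 * q + 1`; so `z` is `childSign a` applied to the depth-`(ℓ + 1)`
ancestor. Row `j` of the depth-`ℓ'` part of `M` sums `z` over the leaves of the depth-`ℓ'`
subtree containing `j`. For `ℓ' > ℓ` that subtree lies below a single child of a depth-`ℓ` node,
where `z` is constant, and the sum is `2 ^ (d - 1 - ℓ') * z j`. For `ℓ' ≤ ℓ` the subtree contains
either both children of `a` or neither, and the `±1` cancel. The eigenvalue is at least its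
`ℓ' = ℓ + 1` term, which is `n / 2 ^ (2 * (ℓ + 1))`.
-/

def childSign (a q : ℕ) : ℝ :=
  if q = 2 * a then 1 else if q = 2 * a + 1 then -1 else 0

theorem childSign_eq_sub (a q : ℕ) :
    childSign a q = (if q = 2 * a then 1 else 0) - (if q = 2 * a + 1 then 1 else 0) := by
  unfold childSign
  split_ifs <;> first | omega | norm_num

theorem card_filter_range_div_eq {n D q : ℕ} (hD : 0 < D) (hq : (q + 1) * D ≤ n) :
    #{k ∈ range n | k / D = q} = D := by
  rw [add_one_mul] at hq
  have hblock : {k ∈ range n | k / D = q} = Ico (q * D) (q * D + D) := by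
    ext k
    simp only [mem_filter, mem_range, mem_Ico, Nat.div_eq_iff hD]
    omega
  simp [hblock]

theorem succ_div_mul_le_of_dvd {n B j : ℕ} (hB : B ∣ n) (hj : j < n) : (j / B + 1) * B ≤ n :=
  calc (j / B + 1) * B ≤ n / B * B := Nat.mul_le_mul_right _ (Nat.div_lt_div_of_lt_of_dvd hB hj)
    _ = n := Nat.div_mul_cancel hB

theorem sum_ite_div_eq_mul_comp_div {n B j : ℕ} (r : ℕ) (g : ℕ → ℝ) (hB : B ∣ n) (hj : j < n) :
    ∑ k ∈ range n, (if j / B = k / B then 1 else 0) * g (k / (B * r)) = B * g (j / (B * r)) := by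
  have hB0 : 0 < B := Nat.pos_of_dvd_of_pos hB (by omega)
  calc ∑ k ∈ range n, (if j / B = k / B then 1 else 0) * g (k / (B * r))
      = ∑ k ∈ range n, (if k / B = j / B then 1 else 0) * g (j / (B * r)) := by
        refine sum_congr rfl fun k _ ↦ ?_
        by_cases h : k / B = j / B
        · rw [if_pos h.symm, if_pos h, ← Nat.div_div_eq_div_mul, ← Nat.div_div_eq_div_mul, h]
        · rw [if_neg (Ne.symm h), if_neg h, zero_mul, zero_mul]
    _ = B * g (j / (B * r)) := by
        rw [← sum_mul, sum_boole, card_filter_range_div_eq hB0 (succ_div_mul_le_of_dvd hB hj)]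

theorem sum_ite_div_eq_mul_childSign_eq_zero {n D m j a : ℕ} (hD : 0 < D)
    (ha : (2 * a + 2) * D ≤ n) :
    ∑ k ∈ range n, (if j / (D * (2 * m)) = k / (D * (2 * m)) then 1 else 0) *
      childSign a (k / D) = 0 := by
  -- a block of `D * (2 * m)` leaves contains both sibling blocks `2 * a`, `2 * a + 1` or neither
  have hsiblings : 2 * a / (2 * m) = (2 * a + 1) / (2 * m) := by
    rw [Nat.mul_div_mul_left _ _ two_pos, ← Nat.div_div_eq_div_mul,
      show (2 * a + 1) / 2 = a by omega]
  set c := if j / (D * (2 * m)) = 2 * a / (2 * m) then (1 : ℝ) else 0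
  have hterm : ∀ k, (if j / (D * (2 * m)) = k / (D * (2 * m)) then 1 else 0) * childSign a (k / D) =
      c * ((if k / D = 2 * a then 1 else 0) - (if k / D = 2 * a + 1 then 1 else 0)) := by
    intro k
    rw [childSign_eq_sub, ← Nat.div_div_eq_div_mul k]
    by_cases h0 : k / D = 2 * a
    · simp [c, h0]
    by_cases h1 : k / D = 2 * a + 1
    · simp [c, h1, hsiblings]
    · simp [h0, h1]
  rw [sum_congr rfl fun k _ ↦ hterm k, ← mul_sum, sum_sub_distrib, sum_boole, sum_boole,
    card_filter_range_div_eq hD (by linarith), card_filter_range_div_eq hD ha, sub_self, mul_zero]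

theorem sum_sameAncestor_mul_childSign {d ℓ ℓ' a j : ℕ} (hℓ : ℓ + 2 ≤ d) (ha : a < 2 ^ ℓ)
    (hj : j < 2 ^ (d - 1)) :
    ∑ k ∈ range (2 ^ (d - 1)), (if j / 2 ^ (d - 1 - ℓ') = k / 2 ^ (d - 1 - ℓ') then 1 else 0) *
      childSign a (k / 2 ^ (d - 2 - ℓ)) =
      if ℓ < ℓ' then 2 ^ (d - 1 - ℓ') * childSign a (j / 2 ^ (d - 2 - ℓ)) else 0 := by
  split_ifs with hℓ'
  · have hsplit : 2 ^ (d - 2 - ℓ) = 2 ^ (d - 1 - ℓ') * 2 ^ (d - 2 - ℓ - (d - 1 - ℓ')) := by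
      rw [← pow_add]; congr 1; omega
    rw [hsplit]
    exact_mod_cast sum_ite_div_eq_mul_comp_div _ _ (pow_dvd_pow 2 (by omega)) hj
  · have hsplit : 2 ^ (d - 1 - ℓ') = 2 ^ (d - 2 - ℓ) * (2 * 2 ^ (ℓ - ℓ')) := by
      rw [← pow_succ', ← pow_add]; congr 1; omega
    have hchildren : (2 * a + 2) * 2 ^ (d - 2 - ℓ) ≤ 2 ^ (d - 1) :=
      calc (2 * a + 2) * 2 ^ (d - 2 - ℓ) ≤ 2 ^ (ℓ + 1) * 2 ^ (d - 2 - ℓ) := by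
            gcongr; rw [pow_succ]; omega
        _ = 2 ^ (d - 1) := by rw [← pow_add]; congr 1; omega
    rw [hsplit]
    exact sum_ite_div_eq_mul_childSign_eq_zero (by positivity) hchildren

theorem pow_div_pow_le_sum_Ico {d ℓ : ℕ} (hℓ : ℓ + 2 ≤ d) :
    (2 : ℝ) ^ (d - 1) / 2 ^ (2 * (ℓ + 1)) ≤ ∑ ℓ' ∈ Ico (ℓ + 1) d, (2 : ℝ) ^ (d - 1 - ℓ') / 2 ^ ℓ' :=
  calc (2 : ℝ) ^ (d - 1) / 2 ^ (2 * (ℓ + 1)) = 2 ^ (d - 1 - (ℓ + 1)) / 2 ^ (ℓ + 1) := by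
        rw [div_eq_div_iff (by positivity) (by positivity), ← pow_add, ← pow_add]; congr 1; omega
    _ ≤ ∑ ℓ' ∈ Ico (ℓ + 1) d, (2 : ℝ) ^ (d - 1 - ℓ') / 2 ^ ℓ' :=
        single_le_sum (f := fun ℓ' ↦ (2 : ℝ) ^ (d - 1 - ℓ') / 2 ^ ℓ') (fun _ _ ↦ by positivity)
          (mem_Ico.2 ⟨le_rfl, by omega⟩)

theorem signed_subtree_eigenvector (d : ℕ) (hd : 3 ≤ d)
    (n : ℕ) (hn : n = 2 ^ (d - 1)) (lam : ℝ) (hlam : lam = 1 / ((n : ℝ) * d))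
    (M : Matrix (Fin n) (Fin n) ℝ)
    (hM : ∀ j k : Fin n, M j k = lam * ∑ ℓ' ∈ range d, ((2 : ℝ) ^ ℓ')⁻¹ *
      (if (j : ℕ) / 2 ^ (d - 1 - ℓ') = (k : ℕ) / 2 ^ (d - 1 - ℓ') then (1 : ℝ) else 0))
    (ℓ a : ℕ) (hℓ : ℓ ≤ d - 2) (ha : a < 2 ^ ℓ)
    (z : Fin n → ℝ)
    (hz : ∀ j : Fin n, z j =
      if (j : ℕ) / 2 ^ (d - 2 - ℓ) = 2 * a then 1
      else if (j : ℕ) / 2 ^ (d - 2 - ℓ) = 2 * a + 1 then -1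
      else 0) :
    M.mulVec z = (lam * ∑ ℓ' ∈ Ico (ℓ + 1) d, (2 : ℝ) ^ (d - 1 - ℓ') / 2 ^ ℓ') • z ∧
    lam * (n : ℝ) / 2 ^ (2 * (ℓ + 1)) ≤
      lam * ∑ ℓ' ∈ Ico (ℓ + 1) d, (2 : ℝ) ^ (d - 1 - ℓ') / 2 ^ ℓ' := by
  subst hn
  have hℓd : ℓ + 2 ≤ d := by omega
  have hz' : ∀ k, z k = childSign a (k / 2 ^ (d - 2 - ℓ)) := hz
  have hlevels : {ℓ' ∈ range d | ℓ < ℓ'} = Ico (ℓ + 1) d := by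
    ext; simp only [mem_filter, mem_range, mem_Ico]; omega
  refine ⟨funext fun j ↦ ?_, ?_⟩
  · calc M.mulVec z j = lam * ∑ ℓ' ∈ range d, ((2 : ℝ) ^ ℓ')⁻¹ *
          ∑ k ∈ range (2 ^ (d - 1)),
            (if j / 2 ^ (d - 1 - ℓ') = k / 2 ^ (d - 1 - ℓ') then 1 else 0) *
            childSign a (k / 2 ^ (d - 2 - ℓ)) := by
          simp only [Matrix.mulVec, dotProduct, hM, hz', mul_sum, sum_mul, mul_assoc, sum_range]
          exact sum_comm
      _ = lam * ∑ ℓ' ∈ range d,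
            ((2 : ℝ) ^ ℓ')⁻¹ * (if ℓ < ℓ' then 2 ^ (d - 1 - ℓ') * z j else 0) := by
          simp only [sum_sameAncestor_mul_childSign hℓd ha j.2, hz']
      _ = ((lam * ∑ ℓ' ∈ Ico (ℓ + 1) d, (2 : ℝ) ^ (d - 1 - ℓ') / 2 ^ ℓ') • z) j := by
          rw [Pi.smul_apply, smul_eq_mul, mul_assoc, sum_mul, ← hlevels, sum_filter]
          simp only [mul_ite, mul_zero, div_eq_inv_mul, mul_assoc]
  · rw [mul_div_assoc]
    exact mul_le_mul_of_nonneg_left (by exact_mod_cast pow_div_pow_le_sum_Ico hℓd)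
      (by rw [hlam]; positivity)
end
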